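/- (Hamiltonian change of the condensed coupled PH-DAE.) Let E ∈ ℝ^{k×n}, Ĵ ∈ ℝ^{k×k}, B̄ ∈ ℝ^{k×m̄}, let z : ℝ^n → ℝ^k and r : ℝ^k → ℝ^k be continuous, let V ⊆ ℝ^k be a subspace on which Ĵ is skew-symmetric (vᵀĴw = −wᵀĴv for v,w ∈ V), and let H be continuously differentiable with ∇H(x) = Eᵀ z(x) whenever z(x) ∈ V. Let ū : [t, t+h] → ℝ^{m̄} be continuous and let x : [t, t+h] → ℝ^n be differentiable with z∘x continuous, satisfying d/dτ (E x(τ)) = Ĵ z(x(τ)) − r(z(x(τ))) + B̄ ū(τ) and z(x(τ)) ∈ V for all τ. Then H(x(t+h)) − H(x(t)) = ∫_t^{t+h} ( −z(x(τ))ᵀ r(z(x(τ))) + ū(τ)ᵀ B̄ᵀ z(x(τ)) ) dτ. -/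

import Mathlib

/-!
Along a solution, the chain rule and `∇H = Eᵀ z` give `d/dτ H(x) = z ⬝ᵥ E x'`. Substituting the
dynamics, the term `z ⬝ᵥ Ĵ z` vanishes because `Ĵ` is skew on `V ∋ z`, leaving the dissipated
power `-(z ⬝ᵥ r(z))` plus the supplied power `ū ⬝ᵥ B̄ᵀ z`; the fundamental theorem of calculus
integrates this balance over `[t, t + h]`.
-/

open Matrix MeasureTheory

theorem Matrix.transpose_mulVec_dotProduct_eq_of_mulVec_eq {R k n m : Type*} [CommRing R]
    [Fintype k] [Fintype n] [Fintype m] {E : Matrix k n R} {J : Matrix k k R}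
    {B : Matrix k m R} {e f : k → R} {u : m → R} {v : n → R}
    (hskew : e ⬝ᵥ J *ᵥ e = 0) (hv : E *ᵥ v = J *ᵥ e - f + B *ᵥ u) :
    Eᵀ *ᵥ e ⬝ᵥ v = -(e ⬝ᵥ f) + u ⬝ᵥ Bᵀ *ᵥ e := by
  rw [mulVec_transpose, ← dotProduct_mulVec, hv, dotProduct_add, dotProduct_sub, hskew,
    dotProduct_mulVec, ← mulVec_transpose, dotProduct_comm _ u]
  ring

theorem ContinuousOn.dotProduct {X ι R : Type*} [TopologicalSpace X] [TopologicalSpace R]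
    [Fintype ι] [Mul R] [AddCommMonoid R] [ContinuousAdd R] [ContinuousMul R]
    {A B : X → ι → R} {s : Set X} (hA : ContinuousOn A s) (hB : ContinuousOn B s) :
    ContinuousOn (fun x => A x ⬝ᵥ B x) s :=
  (continuous_fst.dotProduct continuous_snd).comp_continuousOn (hA.prodMk hB)

theorem condensed_phdae_hamiltonian_change_general {k n mb : ℕ}
    (E : Matrix (Fin k) (Fin n) ℝ) (Jh : Matrix (Fin k) (Fin k) ℝ)
    (Bb : Matrix (Fin k) (Fin mb) ℝ)
    (z : (Fin n → ℝ) → (Fin k → ℝ)) (r : (Fin k → ℝ) → (Fin k → ℝ))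
    (hr : Continuous r)
    (V : Submodule ℝ (Fin k → ℝ))
    (hJ : ∀ v ∈ V, ∀ w ∈ V, v ⬝ᵥ Jh.mulVec w = -(w ⬝ᵥ Jh.mulVec v))
    (H : (Fin n → ℝ) → ℝ) (hH : ContDiff ℝ 1 H)
    (hgrad : ∀ x, z x ∈ V → ∀ w, fderiv ℝ H x w = E.transpose.mulVec (z x) ⬝ᵥ w)
    (t h : ℝ) (hh : 0 ≤ h)
    (ub : ℝ → Fin mb → ℝ) (hub : ContinuousOn ub (Set.Icc t (t + h)))
    (x : ℝ → Fin n → ℝ) (x' : ℝ → Fin n → ℝ)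
    (hx : ∀ τ ∈ Set.Icc t (t + h), HasDerivAt x (x' τ) τ)
    (hzx : ContinuousOn (fun τ => z (x τ)) (Set.Icc t (t + h)))
    (hmem : ∀ τ ∈ Set.Icc t (t + h), z (x τ) ∈ V)
    (hode : ∀ τ ∈ Set.Icc t (t + h),
      E.mulVec (x' τ) = Jh.mulVec (z (x τ)) - r (z (x τ)) + Bb.mulVec (ub τ)) :
    H (x (t + h)) - H (x t) =
      ∫ τ in t..(t + h),
        (-(z (x τ) ⬝ᵥ r (z (x τ))) + ub τ ⬝ᵥ Bb.transpose.mulVec (z (x τ))) := by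
  have hI : Set.uIcc t (t + h) = Set.Icc t (t + h) := Set.uIcc_of_le (le_add_of_nonneg_right hh)
  have hderiv : ∀ τ ∈ Set.uIcc t (t + h), HasDerivAt (fun s => H (x s))
      (-(z (x τ) ⬝ᵥ r (z (x τ))) + ub τ ⬝ᵥ Bb.transpose.mulVec (z (x τ))) τ := by
    intro τ hτ
    rw [hI] at hτ
    have hskew : z (x τ) ⬝ᵥ Jh *ᵥ z (x τ) = 0 :=
      self_eq_neg.mp (hJ _ (hmem τ hτ) _ (hmem τ hτ))
    rw [← transpose_mulVec_dotProduct_eq_of_mulVec_eq hskew (hode τ hτ),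
      ← hgrad _ (hmem τ hτ)]
    exact (hH.differentiable one_ne_zero (x τ)).hasFDerivAt.comp_hasDerivAt τ (hx τ hτ)
  have hcont : ContinuousOn
      (fun τ => -(z (x τ) ⬝ᵥ r (z (x τ))) + ub τ ⬝ᵥ Bb.transpose.mulVec (z (x τ)))
      (Set.uIcc t (t + h)) := by
    rw [hI]
    exact (hzx.dotProduct (hr.comp_continuousOn hzx)).neg.add
      (hub.dotProduct ((continuous_const.matrix_mulVec continuous_id).comp_continuousOn hzx))
  exact (intervalIntegral.integral_eq_sub_of_hasDerivAt hderiv hcont.intervalIntegrable).symm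

/-- Hamiltonian change of the condensed coupled PH-DAE
`d/dτ (E x) = Ĵ z(x) − r(z(x)) + B̄ ū` with `Ĵ` skew-symmetric on the invariant subspace `V`
and `∇H(x) = Eᵀ z(x)` on `z⁻¹(V)`:
`H(x(t+h)) − H(x(t)) = ∫ (−z(x)ᵀ r(z(x)) + ūᵀ B̄ᵀ z(x))`. -/
theorem condensed_phdae_hamiltonian_change {k n mb : ℕ}
    (E : Matrix (Fin k) (Fin n) ℝ) (Jh : Matrix (Fin k) (Fin k) ℝ)
    (Bb : Matrix (Fin k) (Fin mb) ℝ)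
    (z : (Fin n → ℝ) → (Fin k → ℝ)) (r : (Fin k → ℝ) → (Fin k → ℝ))
    (hz : Continuous z) (hr : Continuous r)
    (V : Submodule ℝ (Fin k → ℝ))
    (hJ : ∀ v ∈ V, ∀ w ∈ V, v ⬝ᵥ Jh.mulVec w = -(w ⬝ᵥ Jh.mulVec v))
    (H : (Fin n → ℝ) → ℝ) (hH : ContDiff ℝ 1 H)
    (hgrad : ∀ x, z x ∈ V → ∀ w, fderiv ℝ H x w = E.transpose.mulVec (z x) ⬝ᵥ w)
    (t h : ℝ) (hh : 0 ≤ h)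
    (ub : ℝ → Fin mb → ℝ) (hub : ContinuousOn ub (Set.Icc t (t + h)))
    (x : ℝ → Fin n → ℝ) (x' : ℝ → Fin n → ℝ)
    (hx : ∀ τ ∈ Set.Icc t (t + h), HasDerivAt x (x' τ) τ)
    (hzx : ContinuousOn (fun τ => z (x τ)) (Set.Icc t (t + h)))
    (hmem : ∀ τ ∈ Set.Icc t (t + h), z (x τ) ∈ V)
    (hode : ∀ τ ∈ Set.Icc t (t + h),
      E.mulVec (x' τ) = Jh.mulVec (z (x τ)) - r (z (x τ)) + Bb.mulVec (ub τ)) :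
    H (x (t + h)) - H (x t) =
      ∫ τ in t..(t + h),
        (-(z (x τ) ⬝ᵥ r (z (x τ))) + ub τ ⬝ᵥ Bb.transpose.mulVec (z (x τ))) :=
  condensed_phdae_hamiltonian_change_general E Jh Bb z r hr V hJ H hH hgrad t h hh ub hub x x' hx
    hzx hmem hode
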